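/- arXiv:2504.07337 — 5 statements merged into one kernel-verified Lean document; each statement's English description precedes it below -/
import Mathlib

section
/- For every time t ≥ 2: if t mod 4 ∈ {2, 3} then the k-recent neighborhood S(v, t) equals the multiset containing each node of A exactly once, and if t mod 4 ∈ {0, 1} then S(v, t) equals the multiset containing each node of B exactly once. In particular, S(v, t₁) = S(v, t₂) whenever t₁ mod 4 and t₂ mod 4 both lie in {2, 3}, or both lie in {0, 1}. -/
/-- Node set: nodes of `A` are `Sum.inl a`, nodes of `B` are `Sum.inr (Sum.inl b)`,
and the distinguished node `v` is `Sum.inr (Sum.inr ())`. -/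
abbrev V (k : ℕ) := Sum (Fin k) (Sum (Fin k) Unit)

/-- The distinguished node `v`. -/
def vnode (k : ℕ) : V k := Sum.inr (Sum.inr ())

/-- The batch of partners of `v` at time `t` (in a fixed arbitrary order):
all of `A` if `t % 4 ∈ {1, 2}`, all of `B` otherwise (i.e. `t % 4 ∈ {3, 0}`). -/
def batch (k t : ℕ) : List (V k) :=
  if t % 4 = 1 ∨ t % 4 = 2 then (List.finRange k).map Sum.inl
  else (List.finRange k).map (fun b => Sum.inr (Sum.inl b))

/-- Truth value of "`v` interacts with `u` at time `t`". -/
def interacts (k t : ℕ) (u : V k) : Bool :=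
  decide (1 ≤ t) &&
    (match u with
    | Sum.inl _ => decide (t % 4 = 1 ∨ t % 4 = 2)
    | Sum.inr (Sum.inl _) => decide (t % 4 = 3 ∨ t % 4 = 0)
    | Sum.inr (Sum.inr _) => false)

/-- History of a node `w` at time `t`: the list of neighbors of `w` over all interactions
involving `w` at times `1, …, t-1`, ordered by increasing timestamp (interactions sharing a
timestamp taken in a fixed arbitrary order). -/
def history (k : ℕ) (w : V k) (t : ℕ) : List (V k) :=
  match w with
  | Sum.inr (Sum.inr _) => ((List.range' 1 (t - 1)).map (batch k)).flatten
  | Sum.inl _ =>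
      ((List.range' 1 (t - 1)).filter (fun s => decide (s % 4 = 1 ∨ s % 4 = 2))).map
        (fun _ => vnode k)
  | Sum.inr (Sum.inl _) =>
      ((List.range' 1 (t - 1)).filter (fun s => decide (s % 4 = 3 ∨ s % 4 = 0))).map
        (fun _ => vnode k)

/-- The `k`-recent neighborhood `S(w, t)`: the multiset of the neighbors appearing in the
last `k` entries of the history of `w` at time `t` (all entries if there are fewer). -/
def recentS (k : ℕ) (w : V k) (t : ℕ) : Multiset (V k) :=
  (((history k w t).reverse.take k : List (V k)) : Multiset (V k))

lemma batch_length (k t : ℕ) : (batch k t).length = k := by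
  unfold batch; split <;> simp

lemma recentS_eq (k : ℕ) (t : ℕ) (ht : 2 ≤ t) :
    recentS k (vnode k) t = (batch k (t - 1) : Multiset (V k)) := by
  unfold recentS
  have h : history k (vnode k) t =
      (((List.range' 1 (t - 2)).map (batch k)).flatten) ++ batch k (t - 1) := by
    show ((List.range' 1 (t - 1)).map (batch k)).flatten = _
    have : t - 1 = (t - 2) + 1 := by omega
    rw [this, List.range'_concat]
    simp [show 1 + 1 * (t - 2) = t - 2 + 1 by omega, show 1 + (t-2) = t - 2 + 1 by omega]
  rw [h, List.reverse_append, List.take_append_of_le_length (by simp [batch_length]),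
    List.take_of_length_le (by simp [batch_length])]
  simp

/-- for every time `t ≥ 2`, if `t % 4 ∈ {2, 3}` then the `k`-recent neighborhood
`S(v, t)` is the multiset containing each node of `A` exactly once, and if `t % 4 ∈ {0, 1}`
then it is the multiset containing each node of `B` exactly once; in particular
`S(v, t₁) = S(v, t₂)` whenever `t₁ % 4` and `t₂ % 4` both lie in `{2, 3}` or both lie in
`{0, 1}`. -/
theorem stmt0 (k : ℕ) (hk : 1 ≤ k) :
    (∀ t : ℕ, 2 ≤ t →
      ((t % 4 = 2 ∨ t % 4 = 3) →
        recentS k (vnode k) t =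
          (((List.finRange k).map (Sum.inl : Fin k → V k) : List (V k)) : Multiset (V k))) ∧
      ((t % 4 = 0 ∨ t % 4 = 1) →
        recentS k (vnode k) t =
          (((List.finRange k).map (fun b : Fin k => (Sum.inr (Sum.inl b) : V k)) :
            List (V k)) : Multiset (V k)))) ∧
    (∀ t₁ t₂ : ℕ, 2 ≤ t₁ → 2 ≤ t₂ →
      (((t₁ % 4 = 2 ∨ t₁ % 4 = 3) ∧ (t₂ % 4 = 2 ∨ t₂ % 4 = 3)) ∨
        ((t₁ % 4 = 0 ∨ t₁ % 4 = 1) ∧ (t₂ % 4 = 0 ∨ t₂ % 4 = 1))) →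
      recentS k (vnode k) t₁ = recentS k (vnode k) t₂) := by
  have main : ∀ t : ℕ, 2 ≤ t →
      ((t % 4 = 2 ∨ t % 4 = 3) →
        recentS k (vnode k) t =
          (((List.finRange k).map (Sum.inl : Fin k → V k) : List (V k)) : Multiset (V k))) ∧
      ((t % 4 = 0 ∨ t % 4 = 1) →
        recentS k (vnode k) t =
          (((List.finRange k).map (fun b : Fin k => (Sum.inr (Sum.inl b) : V k)) :
            List (V k)) : Multiset (V k))) := by
    intro t ht
    rw [recentS_eq k t ht]
    constructor
    · intro h
      have : (t - 1) % 4 = 1 ∨ (t - 1) % 4 = 2 := by omega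
      unfold batch; rw [if_pos this]
    · intro h
      have : ¬((t - 1) % 4 = 1 ∨ (t - 1) % 4 = 2) := by omega
      unfold batch; rw [if_neg this]
  refine ⟨main, ?_⟩
  rintro t₁ t₂ h1 h2 (⟨ha, hb⟩ | ⟨ha, hb⟩)
  · rw [(main t₁ h1).1 ha, (main t₂ h2).1 hb]
  · rw [(main t₁ h1).2 ha, (main t₂ h2).2 hb]
end

section
/- For every time t ≥ 2k + 3 and all nodes u₁, u₂ ∈ A ∪ B, the k-recent neighborhoods coincide: S(u₁, t) = S(u₂, t) = the multiset consisting of exactly k copies of v. -/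
lemma countP_step (a b n : ℕ) (h : (a = 1 ∧ b = 2) ∨ (a = 3 ∧ b = 0)) :
    ((List.range' 1 (n+4)).countP (fun s => decide (s % 4 = a ∨ s % 4 = b))) =
    ((List.range' 1 n).countP (fun s => decide (s % 4 = a ∨ s % 4 = b))) + 2 := by
  rw [← List.range'_append_1 (s := 1) (m := n) (n := 4), List.countP_append]
  congr 1
  simp only [List.range', List.countP_cons, List.countP_nil, decide_eq_true_iff]
  split_ifs <;> omega

lemma countP_ge (a b : ℕ) (h : (a = 1 ∧ b = 2) ∨ (a = 3 ∧ b = 0)) : ∀ n : ℕ,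
    n ≤ 2 * ((List.range' 1 n).countP (fun s => decide (s % 4 = a ∨ s % 4 = b))) + 2 := by
  intro n
  induction n using Nat.strong_induction_on with
  | _ n ih =>
    rcases Nat.lt_or_ge n 4 with hn | hn
    · rcases h with ⟨ha, hb⟩ | ⟨ha, hb⟩ <;> subst ha <;> subst hb <;> interval_cases n <;> decide
    · obtain ⟨m, rfl⟩ : ∃ m, n = m + 4 := ⟨n - 4, by omega⟩
      rw [countP_step a b m h]
      have := ih m (by omega)
      omega

lemma recent_single (k t : ℕ) (ht : 2 * k + 3 ≤ t) (a b : ℕ)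
    (h : (a = 1 ∧ b = 2) ∨ (a = 3 ∧ b = 0)) :
    (((((List.range' 1 (t-1)).filter (fun s => decide (s % 4 = a ∨ s % 4 = b))).map
        (fun _ => vnode k)).reverse.take k : List _) : Multiset _)
      = Multiset.replicate k (vnode k) := by
  have hlen : k ≤ ((List.range' 1 (t-1)).filter
      (fun s => decide (s % 4 = a ∨ s % 4 = b))).length := by
    rw [← List.countP_eq_length_filter]
    have := countP_ge a b h (t - 1)
    omega
  rw [List.map_const', List.reverse_replicate, List.take_replicate,
    Nat.min_eq_left hlen, Multiset.coe_replicate]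

lemma recentS_eq_s1 (k t : ℕ) (ht : 2 * k + 3 ≤ t) (u : V k)
    (h : (∃ a : Fin k, u = Sum.inl a) ∨ (∃ b : Fin k, u = Sum.inr (Sum.inl b))) :
    recentS k u t = Multiset.replicate k (vnode k) := by
  rcases h with ⟨a, rfl⟩ | ⟨b, rfl⟩
  · rw [recentS, history]
    exact recent_single k t ht 1 2 (Or.inl ⟨rfl, rfl⟩)
  · rw [recentS, history]
    exact recent_single k t ht 3 0 (Or.inr ⟨rfl, rfl⟩)

/-- for every time `t ≥ 2k + 3` and all nodes `u₁, u₂ ∈ A ∪ B`, the `k`-recent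
neighborhoods coincide: `S(u₁, t) = S(u₂, t) =` the multiset of exactly `k` copies of `v`. -/
theorem stmt1 (k : ℕ) (hk : 1 ≤ k) (t : ℕ) (ht : 2 * k + 3 ≤ t)
    (u₁ u₂ : V k)
    (h₁ : (∃ a : Fin k, u₁ = Sum.inl a) ∨ (∃ b : Fin k, u₁ = Sum.inr (Sum.inl b)))
    (h₂ : (∃ a : Fin k, u₂ = Sum.inl a) ∨ (∃ b : Fin k, u₂ = Sum.inr (Sum.inl b))) :
    recentS k u₁ t = recentS k u₂ t ∧
    recentS k u₁ t = Multiset.replicate k (vnode k) := by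
  have e₁ := recentS_eq_s1 k t ht u₁ h₁
  have e₂ := recentS_eq_s1 k t ht u₂ h₂
  exact ⟨e₁.trans e₂.symm, e₁⟩
end

section
/- For every time t ≥ 2k + 3 and every node u ∈ A ∪ B such that v interacts with u at time t, there exists a node u′ ∈ A ∪ B such that v does not interact with u′ at time t and S(u′, t) = S(u, t). Consequently, for every type Z and all functions ψ : Multiset V → Z and merge : Z → Z → Bool, the predictions coincide: merge (ψ (S(v, t))) (ψ (S(u, t))) = merge (ψ (S(v, t))) (ψ (S(u′, t))), so any such predictor is correct on exactly one of the positive pair (v, u) and the negative pair (v, u′). -/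
private lemma range'_split4 (n : ℕ) :
    List.range' 1 n = List.range' 1 (4 * (n / 4)) ++ List.range' (1 + 4 * (n / 4)) (n - 4 * (n / 4)) := by
  have h := @List.range'_append 1 (4 * (n / 4)) (n - 4 * (n / 4)) 1
  simp only [one_mul] at h
  rw [h]
  congr 1
  omega

private lemma filter_range'_len (p : ℕ → Bool)
    (hp : ∀ m : ℕ, (([4*m+1, 4*m+2, 4*m+3, 4*m+4]).filter p).length = 2) :
    ∀ m : ℕ, ((List.range' 1 (4*m)).filter p).length = 2*m := by
  intro m
  induction m with
  | zero => simp
  | succ n ih =>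
    have h := @List.range'_append 1 (4*n) 4 1
    have h4 : List.range' (1 + 1 * (4*n)) 4 1 = [4*n+1, 4*n+2, 4*n+3, 4*n+4] := by
      simp [List.range']
      omega
    rw [h4] at h
    rw [show 4*(n+1) = 4*n + 4 by ring, ← h, List.filter_append, List.length_append, ih, hp]
    ring

private lemma len_geA (k n : ℕ) (hn : 2*k + 2 ≤ n) :
    k ≤ ((List.range' 1 n).filter (fun s => decide (s % 4 = 1 ∨ s % 4 = 2))).length := by
  rw [range'_split4 n, List.filter_append, List.length_append,
    filter_range'_len _ (by
      intro m
      have h1 : (4*m+1) % 4 = 1 := by omega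
      have h2 : (4*m+2) % 4 = 2 := by omega
      have h3 : (4*m+3) % 4 = 3 := by omega
      have h4 : (4*m+4) % 4 = 0 := by omega
      simp [List.filter, h1, h2, h3, h4])]
  omega

private lemma len_geB (k n : ℕ) (hn : 2*k + 2 ≤ n) :
    k ≤ ((List.range' 1 n).filter (fun s => decide (s % 4 = 3 ∨ s % 4 = 0))).length := by
  rw [range'_split4 n, List.filter_append, List.length_append,
    filter_range'_len _ (by
      intro m
      have h1 : (4*m+1) % 4 = 1 := by omega
      have h2 : (4*m+2) % 4 = 2 := by omega
      have h3 : (4*m+3) % 4 = 3 := by omega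
      have h4 : (4*m+4) % 4 = 0 := by omega
      simp [List.filter, h1, h2, h3, h4])]
  omega

private lemma recentA (k t : ℕ) (a : Fin k) (ht : 2 * k + 3 ≤ t) :
    recentS k (Sum.inl a) t = Multiset.replicate k (vnode k) := by
  have hlen := len_geA k (t - 1) (by omega)
  have hh : history k (Sum.inl a) t =
      List.map (fun _ => vnode k)
        ((List.range' 1 (t - 1)).filter (fun s => decide (s % 4 = 1 ∨ s % 4 = 2))) := rfl
  rw [recentS, hh, List.map_const', List.reverse_replicate, List.take_replicate,
    min_eq_left hlen, Multiset.coe_replicate]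

private lemma recentB (k t : ℕ) (b : Fin k) (ht : 2 * k + 3 ≤ t) :
    recentS k (Sum.inr (Sum.inl b)) t = Multiset.replicate k (vnode k) := by
  have hlen := len_geB k (t - 1) (by omega)
  have hh : history k (Sum.inr (Sum.inl b)) t =
      List.map (fun _ => vnode k)
        ((List.range' 1 (t - 1)).filter (fun s => decide (s % 4 = 3 ∨ s % 4 = 0))) := rfl
  rw [recentS, hh, List.map_const', List.reverse_replicate, List.take_replicate,
    min_eq_left hlen, Multiset.coe_replicate]

/-- for every `t ≥ 2k + 3` and every `u ∈ A ∪ B` such that `v` interacts with `u`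
at time `t`, there is `u' ∈ A ∪ B` such that `v` does not interact with `u'` at time `t` and
`S(u', t) = S(u, t)`; consequently for every type `Z` and all `ψ : Multiset V → Z`,
`merge : Z → Z → Bool` the predictions coincide, so any such predictor is correct on exactly
one of the positive pair `(v, u)` and the negative pair `(v, u')`. -/
theorem stmt2 (k : ℕ) (hk : 1 ≤ k) (t : ℕ) (ht : 2 * k + 3 ≤ t)
    (u : V k)
    (hu : (∃ a : Fin k, u = Sum.inl a) ∨ (∃ b : Fin k, u = Sum.inr (Sum.inl b)))
    (hint : interacts k t u = true) :
    ∃ u' : V k,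
      ((∃ a : Fin k, u' = Sum.inl a) ∨ (∃ b : Fin k, u' = Sum.inr (Sum.inl b))) ∧
      interacts k t u' = false ∧
      recentS k u' t = recentS k u t ∧
      ∀ (Z : Type) (ψ : Multiset (V k) → Z) (merge : Z → Z → Bool),
        merge (ψ (recentS k (vnode k) t)) (ψ (recentS k u t)) =
          merge (ψ (recentS k (vnode k) t)) (ψ (recentS k u' t)) ∧
        ((merge (ψ (recentS k (vnode k) t)) (ψ (recentS k u t)) = interacts k t u) ↔
          ¬(merge (ψ (recentS k (vnode k) t)) (ψ (recentS k u' t)) = interacts k t u')) := by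
  obtain ⟨a, rfl⟩ | ⟨b, rfl⟩ := hu
  · -- u ∈ A, so t % 4 ∈ {1, 2}; pick u' ∈ B
    have hmod : t % 4 = 1 ∨ t % 4 = 2 := by
      simp [interacts] at hint
      exact hint.2
    refine ⟨Sum.inr (Sum.inl ⟨0, hk⟩), Or.inr ⟨_, rfl⟩, ?_, ?_, ?_⟩
    · simp [interacts]
      omega
    · rw [recentB k t _ ht, recentA k t _ ht]
    · intro Z ψ merge
      have heq : recentS k (Sum.inr (Sum.inl (⟨0, hk⟩ : Fin k))) t
          = recentS k (Sum.inl a) t := by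
        rw [recentB k t _ ht, recentA k t _ ht]
      rw [heq]
      refine ⟨rfl, ?_⟩
      have hfalse : interacts k t (Sum.inr (Sum.inl (⟨0, hk⟩ : Fin k))) = false := by
        simp [interacts]
        omega
      rw [hint, hfalse]
      cases merge (ψ (recentS k (vnode k) t)) (ψ (recentS k (Sum.inl a) t)) <;> simp
  · -- u ∈ B, so t % 4 ∈ {3, 0}; pick u' ∈ A
    have hmod : t % 4 = 3 ∨ t % 4 = 0 := by
      simp [interacts] at hint
      exact hint.2
    refine ⟨Sum.inl ⟨0, hk⟩, Or.inl ⟨_, rfl⟩, ?_, ?_, ?_⟩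
    · simp [interacts]
      omega
    · rw [recentA k t _ ht, recentB k t _ ht]
    · intro Z ψ merge
      have heq : recentS k (Sum.inl (⟨0, hk⟩ : Fin k)) t
          = recentS k (Sum.inr (Sum.inl b)) t := by
        rw [recentA k t _ ht, recentB k t _ ht]
      rw [heq]
      refine ⟨rfl, ?_⟩
      have hfalse : interacts k t (Sum.inl (⟨0, hk⟩ : Fin k)) = false := by
        simp [interacts]
        omega
      rw [hint, hfalse]
      cases merge (ψ (recentS k (vnode k) t)) (ψ (recentS k (Sum.inr (Sum.inl b)) t)) <;> simp
end

section
/- For every time t ≥ 2k + 3, every type Z, and all functions ψ : Multiset V → Z and merge : Z → Z → Bool, the number of nodes u ∈ A ∪ B for which the prediction merge (ψ (S(v, t))) (ψ (S(u, t))) is correct (i.e., equals the truth value of 'v interacts with u at time t') is exactly k, that is, exactly half of the 2k candidate pairs. Hence the accuracy of any TGNN using k-recent selection on this dynamic graph is exactly 50%. -/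
lemma blk12 (m : ℕ) :
    ((List.range' 1 (4*m)).filter (fun s => decide (s % 4 = 1 ∨ s % 4 = 2))).length = 2*m := by
  induction m with
  | zero => simp
  | succ m ih =>
    have h4 : 4*(m+1) = 4*m + 4 := by ring
    rw [h4, ← List.range'_append_1 (s := 1) (m := 4*m) (n := 4), List.filter_append, List.length_append, ih]
    have e : (1 + 4*m) % 4 = 1 := by omega
    have e2 : (1 + 4*m + 1) % 4 = 2 := by omega
    have e3 : (1 + 4*m + 1 + 1) % 4 = 3 := by omega
    have e4 : (1 + 4*m + 1 + 1 + 1) % 4 = 0 := by omega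
    simp [List.range', List.filter, e, e2, e3, e4]; ring

lemma blk30 (m : ℕ) :
    ((List.range' 1 (4*m)).filter (fun s => decide (s % 4 = 3 ∨ s % 4 = 0))).length = 2*m := by
  induction m with
  | zero => simp
  | succ m ih =>
    have h4 : 4*(m+1) = 4*m + 4 := by ring
    rw [h4, ← List.range'_append_1 (s := 1) (m := 4*m) (n := 4), List.filter_append, List.length_append, ih]
    have e : (1 + 4*m) % 4 = 1 := by omega
    have e2 : (1 + 4*m + 1) % 4 = 2 := by omega
    have e3 : (1 + 4*m + 1 + 1) % 4 = 3 := by omega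
    have e4 : (1 + 4*m + 1 + 1 + 1) % 4 = 0 := by omega
    simp [List.range', List.filter, e, e2, e3, e4]; ring

lemma len_ge (p : ℕ → Bool) (hp : ∀ m, ((List.range' 1 (4*m)).filter p).length = 2*m)
    (k n : ℕ) (hn : 2*k+2 ≤ n) : k ≤ ((List.range' 1 n).filter p).length := by
  set m := (k+1)/2 with hm
  have h4 : 4*m ≤ n := by omega
  have hsplit : List.range' 1 n = List.range' 1 (4*m) ++ List.range' (1 + 4*m) (n - 4*m) := by
    rw [List.range'_append_1]; congr 1; omega
  rw [hsplit, List.filter_append, List.length_append, hp m]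
  omega

lemma recentS_const (k t : ℕ) (ht : 2*k+3 ≤ t) (u : V k) (hu : u ≠ vnode k) :
    recentS k u t = Multiset.replicate k (vnode k) := by
  have hn : 2*k+2 ≤ t - 1 := by omega
  have key : ∀ (L : List ℕ), k ≤ L.length →
      ((((L.map (fun _ => vnode k)).reverse.take k : List (V k))) : Multiset (V k))
        = Multiset.replicate k (vnode k) := by
    intro L hL
    rw [← List.map_reverse, ← List.map_take, List.map_const']
    have : (L.reverse.take k).length = k := by
      simp [List.length_take, hL]
    rw [this, Multiset.coe_replicate]
  cases u with
  | inl a => exact key _ (len_ge _ blk12 k (t-1) hn)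
  | inr w =>
    cases w with
    | inl b => exact key _ (len_ge _ blk30 k (t-1) hn)
    | inr x => exact absurd rfl hu

/-- for every `t ≥ 2k + 3`, every type `Z` and all `ψ`, `merge`, the number of
nodes `u ∈ A ∪ B` (the `2k` nodes other than `v`) on which the prediction
`merge (ψ (S(v,t))) (ψ (S(u,t)))` is correct (equals the truth value of "`v` interacts with
`u` at time `t`") is exactly `k` — exactly half of the `2k` candidate pairs. -/
theorem stmt3 (k : ℕ) (hk : 1 ≤ k) (t : ℕ) (ht : 2 * k + 3 ≤ t)
    (Z : Type) (ψ : Multiset (V k) → Z) (merge : Z → Z → Bool) :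
    (Finset.univ.filter (fun u : V k => u ≠ vnode k)).card = 2 * k ∧
    ((Finset.univ.filter (fun u : V k => u ≠ vnode k)).filter
        (fun u : V k =>
          merge (ψ (recentS k (vnode k) t)) (ψ (recentS k u t)) = interacts k t u)).card
      = k := by
  constructor
  · rw [Finset.filter_ne', Finset.card_erase_of_mem (Finset.mem_univ _), Finset.card_univ]
    simp [V]; ring
  · set b : Bool := merge (ψ (recentS k (vnode k) t)) (ψ (Multiset.replicate k (vnode k))) with hb
    have ht1 : 1 ≤ t := by omega
    have hrec : ∀ u : V k, u ≠ vnode k →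
        merge (ψ (recentS k (vnode k) t)) (ψ (recentS k u t)) = b := by
      intro u hu; rw [recentS_const k t ht u hu]
    have cardim : ∀ f : Fin k → V k, Function.Injective f →
        (Finset.univ.image f).card = k := by
      intro f hf
      rw [Finset.card_image_of_injective _ hf, Finset.card_univ, Fintype.card_fin]
    by_cases hmod : t % 4 = 1 ∨ t % 4 = 2
    · have hA : ∀ a : Fin k, interacts k t (Sum.inl a) = true := by
        intro a; simp [interacts, ht1, hmod]
      have hB : ∀ x : Fin k, interacts k t (Sum.inr (Sum.inl x)) = false := by
        intro x; simp [interacts]; omega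
      by_cases hbt : b = true
      · have : ((Finset.univ.filter (fun u : V k => u ≠ vnode k)).filter
            (fun u : V k =>
              merge (ψ (recentS k (vnode k) t)) (ψ (recentS k u t)) = interacts k t u))
            = Finset.univ.image (Sum.inl : Fin k → V k) := by
          ext u
          simp only [Finset.mem_filter, Finset.mem_univ, true_and, Finset.mem_image]
          constructor
          · rintro ⟨hu, heq⟩
            match u with
            | Sum.inl a => exact ⟨a, rfl⟩
            | Sum.inr (Sum.inl x) =>
              rw [hrec _ hu, hbt, hB] at heq; exact absurd heq (by simp)
            | Sum.inr (Sum.inr x) => exact absurd rfl hu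
          · rintro ⟨a, rfl⟩
            have hne : (Sum.inl a : V k) ≠ vnode k := by simp [vnode]
            exact ⟨hne, by rw [hrec _ hne, hbt, hA]⟩
        rw [this]; exact cardim _ Sum.inl_injective
      · have hbf : b = false := by simpa using hbt
        have : ((Finset.univ.filter (fun u : V k => u ≠ vnode k)).filter
            (fun u : V k =>
              merge (ψ (recentS k (vnode k) t)) (ψ (recentS k u t)) = interacts k t u))
            = Finset.univ.image (fun x : Fin k => (Sum.inr (Sum.inl x) : V k)) := by
          ext u
          simp only [Finset.mem_filter, Finset.mem_univ, true_and, Finset.mem_image]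
          constructor
          · rintro ⟨hu, heq⟩
            match u with
            | Sum.inl a =>
              rw [hrec _ hu, hbf, hA] at heq; exact absurd heq (by simp)
            | Sum.inr (Sum.inl x) => exact ⟨x, rfl⟩
            | Sum.inr (Sum.inr x) => exact absurd rfl hu
          · rintro ⟨x, rfl⟩
            have hne : (Sum.inr (Sum.inl x) : V k) ≠ vnode k := by simp [vnode]
            exact ⟨hne, by rw [hrec _ hne, hbf, hB]⟩
        rw [this]
        exact cardim _ (fun x y h => by simpa using h)
    · have hmod' : t % 4 = 3 ∨ t % 4 = 0 := by omega
      have hA : ∀ a : Fin k, interacts k t (Sum.inl a) = false := by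
        intro a; simp [interacts]; omega
      have hB : ∀ x : Fin k, interacts k t (Sum.inr (Sum.inl x)) = true := by
        intro x; simp [interacts, ht1, hmod']
      by_cases hbt : b = true
      · have : ((Finset.univ.filter (fun u : V k => u ≠ vnode k)).filter
            (fun u : V k =>
              merge (ψ (recentS k (vnode k) t)) (ψ (recentS k u t)) = interacts k t u))
            = Finset.univ.image (fun x : Fin k => (Sum.inr (Sum.inl x) : V k)) := by
          ext u
          simp only [Finset.mem_filter, Finset.mem_univ, true_and, Finset.mem_image]
          constructor
          · rintro ⟨hu, heq⟩
            match u with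
            | Sum.inl a =>
              rw [hrec _ hu, hbt, hA] at heq; exact absurd heq (by simp)
            | Sum.inr (Sum.inl x) => exact ⟨x, rfl⟩
            | Sum.inr (Sum.inr x) => exact absurd rfl hu
          · rintro ⟨x, rfl⟩
            have hne : (Sum.inr (Sum.inl x) : V k) ≠ vnode k := by simp [vnode]
            exact ⟨hne, by rw [hrec _ hne, hbt, hB]⟩
        rw [this]
        exact cardim _ (fun x y h => by simpa using h)
      · have hbf : b = false := by simpa using hbt
        have : ((Finset.univ.filter (fun u : V k => u ≠ vnode k)).filter
            (fun u : V k =>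
              merge (ψ (recentS k (vnode k) t)) (ψ (recentS k u t)) = interacts k t u))
            = Finset.univ.image (Sum.inl : Fin k → V k) := by
          ext u
          simp only [Finset.mem_filter, Finset.mem_univ, true_and, Finset.mem_image]
          constructor
          · rintro ⟨hu, heq⟩
            match u with
            | Sum.inl a => exact ⟨a, rfl⟩
            | Sum.inr (Sum.inl x) =>
              rw [hrec _ hu, hbf, hB] at heq; exact absurd heq (by simp)
            | Sum.inr (Sum.inr x) => exact absurd rfl hu
          · rintro ⟨a, rfl⟩
            have hne : (Sum.inl a : V k) ≠ vnode k := by simp [vnode]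
            exact ⟨hne, by rw [hrec _ hne, hbf, hA]⟩
        rw [this]; exact cardim _ Sum.inl_injective
end

section
/- There exist times t₁ ≠ t₂ — indeed, any t₁ ≡ 2 (mod 4) and t₂ ≡ 3 (mod 4) with t₁, t₂ ≥ 2k + 3 — such that S(w, t₁) = S(w, t₂) for every node w ∈ V, yet the interactions occurring at t₁ and at t₂ differ: v interacts with every node of A at time t₁ and with every node of B at time t₂. Hence the k-recent neighborhoods of all nodes do not determine the interactions at the current time. -/
lemma countA (n : ℕ) :
    ((List.range' 1 n).filter (fun s => decide (s % 4 = 1 ∨ s % 4 = 2))).length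
      = 2 * (n / 4) + min (n % 4) 2 := by
  induction n with
  | zero => simp
  | succ n ih =>
    rw [List.range'_concat, List.filter_append, List.length_append, ih]
    simp only [List.filter_cons, List.filter_nil, one_mul, decide_eq_true_eq]
    split_ifs with h <;> simp <;> omega

lemma countB (n : ℕ) :
    ((List.range' 1 n).filter (fun s => decide (s % 4 = 3 ∨ s % 4 = 0))).length
      = 2 * (n / 4) + (if n % 4 = 3 then 1 else 0) := by
  induction n with
  | zero => simp
  | succ n ih =>
    rw [List.range'_concat, List.filter_append, List.length_append, ih]
    simp only [List.filter_cons, List.filter_nil, one_mul, decide_eq_true_eq]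
    split_ifs with h <;> simp <;> omega

lemma recentS_inl (k : ℕ) (a : Fin k) (t : ℕ)
    (h : k ≤ ((List.range' 1 (t - 1)).filter (fun s => decide (s % 4 = 1 ∨ s % 4 = 2))).length) :
    recentS k (Sum.inl a) t = Multiset.replicate k (vnode k) := by
  simp only [recentS, history]
  rw [List.map_const', List.reverse_replicate, List.take_replicate, min_eq_left h,
    Multiset.coe_replicate]

lemma recentS_inrl (k : ℕ) (b : Fin k) (t : ℕ)
    (h : k ≤ ((List.range' 1 (t - 1)).filter (fun s => decide (s % 4 = 3 ∨ s % 4 = 0))).length) :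
    recentS k (Sum.inr (Sum.inl b)) t = Multiset.replicate k (vnode k) := by
  simp only [recentS, history]
  rw [List.map_const', List.reverse_replicate, List.take_replicate, min_eq_left h,
    Multiset.coe_replicate]

lemma recentS_v (k t : ℕ) (ht : 2 ≤ t) (h : (t - 1) % 4 = 1 ∨ (t - 1) % 4 = 2) :
    recentS k (Sum.inr (Sum.inr ())) t
      = (((List.finRange k).map (Sum.inl : Fin k → V k)).reverse : Multiset (V k)) := by
  obtain ⟨m, rfl⟩ : ∃ m, t = m + 2 := ⟨t - 2, by omega⟩
  have hm : m + 2 - 1 = m + 1 := rfl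
  simp only [recentS, history]
  rw [hm, List.range'_concat, List.map_append, List.flatten_append, List.reverse_append]
  have h1 : (1 + 1 * m) % 4 = 1 ∨ (1 + 1 * m) % 4 = 2 := by
    simp only [one_mul]; omega
  simp only [List.map_cons, List.map_nil, List.flatten_cons, List.flatten_nil,
    List.append_nil, batch, if_pos h1]
  rw [List.take_left' (by simp)]

/-- any `t₁ ≡ 2 (mod 4)` and `t₂ ≡ 3 (mod 4)` with `t₁, t₂ ≥ 2k + 3` satisfy
`t₁ ≠ t₂` and `S(w, t₁) = S(w, t₂)` for every node `w`, yet the interactions at `t₁` and `t₂`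
differ: `v` interacts with every node of `A` (and no node of `B`) at time `t₁`, and with every
node of `B` (and no node of `A`) at time `t₂`. Hence the `k`-recent neighborhoods of all
nodes do not determine the interactions at the current time. -/
theorem stmt4 (k : ℕ) (hk : 1 ≤ k) (t₁ t₂ : ℕ)
    (h₁ : t₁ % 4 = 2) (h₂ : t₂ % 4 = 3) (ht₁ : 2 * k + 3 ≤ t₁) (ht₂ : 2 * k + 3 ≤ t₂) :
    t₁ ≠ t₂ ∧
    (∀ w : V k, recentS k w t₁ = recentS k w t₂) ∧
    (∀ a : Fin k, interacts k t₁ (Sum.inl a) = true) ∧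
    (∀ b : Fin k, interacts k t₂ (Sum.inr (Sum.inl b)) = true) ∧
    (∀ a : Fin k, interacts k t₂ (Sum.inl a) = false) ∧
    (∀ b : Fin k, interacts k t₁ (Sum.inr (Sum.inl b)) = false) := by
  refine ⟨by omega, ?_, ?_, ?_, ?_, ?_⟩
  · rintro (a | b | ⟨⟩)
    · rw [recentS_inl k a t₁ (by rw [countA]; omega),
        recentS_inl k a t₂ (by rw [countA]; omega)]
    · rw [recentS_inrl k b t₁ (by rw [countB]; omega),
        recentS_inrl k b t₂ (by rw [countB]; omega)]
    · rw [recentS_v k t₁ (by omega) (by omega), recentS_v k t₂ (by omega) (by omega)]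
  · intro a; simp [interacts, h₁]; omega
  · intro b; simp [interacts, h₂]; omega
  · intro a; simp [interacts, h₂]
  · intro b; simp [interacts, h₁]
end
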